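/- Gentle measurement lemma (purified-distance form): if Π is an orthogonal projection and ρ is a density operator with Tr[Πρ] ≥ 1 − ε for some ε ∈ [0,1], then the purified distance between ρ and the post-measurement state ρ' := ΠρΠ / Tr[ΠρΠ] satisfies D_p(ρ, ρ') ≤ √ε. -/

import Mathlib

open Matrix
open scoped ComplexOrder

noncomputable def traceNorm {n : Type*} [Fintype n] [DecidableEq n] (A : Matrix n n ℂ) : ℝ :=
  (((Matrix.posSemidef_conjTranspose_mul_self A).1.eigenvectorUnitary.1 *
    diagonal (((↑) : ℝ → ℂ) ∘ (√·) ∘ (Matrix.posSemidef_conjTranspose_mul_self A).1.eigenvalues) *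
    (star (Matrix.posSemidef_conjTranspose_mul_self A).1.eigenvectorUnitary : Matrix n n ℂ)).trace).re

open Classical in
noncomputable def msqrt {n : Type*} [Fintype n] [DecidableEq n] (A : Matrix n n ℂ) : Matrix n n ℂ :=
  if h : A.PosSemidef then h.1.eigenvectorUnitary.1 * diagonal (((↑) : ℝ → ℂ) ∘ (√·) ∘ h.1.eigenvalues) *
    (star h.1.eigenvectorUnitary : Matrix n n ℂ) else 0

/-- Fidelity `F(ρ,σ) = (Tr|ρ^{1/2}σ^{1/2}|)²`. -/
noncomputable def fidelity {n : Type*} [Fintype n] [DecidableEq n] (ρ σ : Matrix n n ℂ) : ℝ :=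
  (traceNorm (msqrt ρ * msqrt σ))^2

/-- Purified distance `D_p(ρ,σ) = √(1 - F(ρ,σ))`. -/
noncomputable def purifiedDist {n : Type*} [Fintype n] [DecidableEq n] (ρ σ : Matrix n n ℂ) : ℝ :=
  Real.sqrt (1 - fidelity ρ σ)

open scoped MatrixOrder

/-! The fidelity of `ρ` with `PρP / Tr[PρP]` equals `Tr[Pρ]`, whence `D_p ≤ √ε` at once. With
`S = √(PρP)` one has `PS = S = SP`, so `(√ρ S)ᴴ(√ρ S) = SρS = S(PρP)S = (PρP)²` and
`Tr|√ρ S| = Tr[PρP] = Tr[Pρ]`; the normalisation divides the squared trace norm by `Tr[PρP]`. -/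

section

variable {n : Type*} [Fintype n]

lemma trace_mul_mul_self_of_idempotent {P : Matrix n n ℂ} (hP2 : P * P = P) (ρ : Matrix n n ℂ) :
    (P * ρ * P).trace = (P * ρ).trace := by
  rw [trace_mul_cycle, hP2]

lemma Matrix.PosSemidef.mul_mul_same_of_isHermitian {P ρ : Matrix n n ℂ} (hPh : P.IsHermitian)
    (hρ : ρ.PosSemidef) : (P * ρ * P).PosSemidef := by
  simpa only [hPh.eq] using hρ.conjTranspose_mul_mul_same P

variable [DecidableEq n]

lemma msqrt_eq_cfcSqrt {A : Matrix n n ℂ} (hA : A.PosSemidef) : msqrt A = CFC.sqrt A := by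
  rw [msqrt, dif_pos hA, CFC.sqrt_eq_cfc, cfc_nnreal_eq_real _ A, hA.1.cfc_eq]
  simp only [IsHermitian.cfc, Unitary.conjStarAlgAut_apply]
  congr 3
  funext i
  simp [Real.coe_sqrt, hA.eigenvalues_nonneg i]

lemma posSemidef_msqrt {A : Matrix n n ℂ} (hA : A.PosSemidef) : (msqrt A).PosSemidef := by
  rw [msqrt_eq_cfcSqrt hA, ← nonneg_iff_posSemidef]
  exact CFC.sqrt_nonneg A

lemma msqrt_mul_msqrt {A : Matrix n n ℂ} (hA : A.PosSemidef) : msqrt A * msqrt A = A := by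
  rw [msqrt_eq_cfcSqrt hA]
  exact CFC.sqrt_mul_sqrt_self A hA.nonneg

lemma msqrt_unique {A B : Matrix n n ℂ} (hB : B.PosSemidef) (h : B * B = A) : msqrt A = B := by
  have hA : A.PosSemidef := by simpa [hB.1.eq, h] using posSemidef_conjTranspose_mul_self B
  rw [msqrt_eq_cfcSqrt hA]
  exact CFC.sqrt_unique h hB.nonneg

lemma traceNorm_eq_re_trace_msqrt (A : Matrix n n ℂ) :
    traceNorm A = (msqrt (Aᴴ * A)).trace.re := by
  rw [traceNorm, msqrt, dif_pos (posSemidef_conjTranspose_mul_self A)]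

lemma msqrt_real_smul {r : ℝ} (hr : 0 ≤ r) {A : Matrix n n ℂ} (hA : A.PosSemidef) :
    msqrt ((r : ℂ) • A) = (√r : ℂ) • msqrt A := by
  refine msqrt_unique ((posSemidef_msqrt hA).smul (Complex.zero_le_real.mpr (Real.sqrt_nonneg r))) ?_
  rw [smul_mul_smul_comm, msqrt_mul_msqrt hA, ← Complex.ofReal_mul, Real.mul_self_sqrt hr]

lemma traceNorm_real_smul {r : ℝ} (hr : 0 ≤ r) (A : Matrix n n ℂ) :
    traceNorm ((r : ℂ) • A) = r * traceNorm A := by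
  rw [traceNorm_eq_re_trace_msqrt, traceNorm_eq_re_trace_msqrt, conjTranspose_smul,
    smul_mul_smul_comm, Complex.star_def, Complex.conj_ofReal, ← Complex.ofReal_mul,
    msqrt_real_smul (mul_self_nonneg r) (posSemidef_conjTranspose_mul_self A),
    Real.sqrt_mul_self hr, trace_smul, smul_eq_mul, Complex.re_ofReal_mul]

lemma fidelity_real_smul_right {r : ℝ} (hr : 0 ≤ r) (ρ : Matrix n n ℂ) {σ : Matrix n n ℂ}
    (hσ : σ.PosSemidef) : fidelity ρ ((r : ℂ) • σ) = r * fidelity ρ σ := by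
  rw [fidelity, fidelity, msqrt_real_smul hr hσ, mul_smul_comm,
    traceNorm_real_smul (Real.sqrt_nonneg r), mul_pow, Real.sq_sqrt hr]

lemma mul_msqrt_eq_zero_of_mul_eq_zero {X M : Matrix n n ℂ} (hM : M.PosSemidef)
    (h : X * M = 0) : X * msqrt M = 0 := by
  rwa [← mul_self_mul_conjTranspose_eq_zero, (posSemidef_msqrt hM).1.eq, msqrt_mul_msqrt hM]

variable {P ρ : Matrix n n ℂ}

lemma traceNorm_msqrt_mul_msqrt_conj_projection (hPh : P.IsHermitian) (hP2 : P * P = P)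
    (hρ : ρ.PosSemidef) : traceNorm (msqrt ρ * msqrt (P * ρ * P)) = (P * ρ).trace.re := by
  set M := P * ρ * P with hMdef
  have hM : M.PosSemidef := hρ.mul_mul_same_of_isHermitian hPh
  set S := msqrt M
  have hS : S.PosSemidef := posSemidef_msqrt hM
  have hS2 : S * S = M := msqrt_mul_msqrt hM
  have hPS : P * S = S := by
    have : (1 - P) * S = 0 := mul_msqrt_eq_zero_of_mul_eq_zero hM <| by
      simp only [hMdef, sub_mul, one_mul, ← mul_assoc, hP2, sub_self, zero_mul]
    rwa [sub_mul, one_mul, sub_eq_zero, eq_comm] at this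
  have hSP : S * P = S := by
    have := congrArg conjTranspose hPS
    rwa [conjTranspose_mul, hS.1.eq, hPh.eq] at this
  have hkey : (msqrt ρ * S)ᴴ * (msqrt ρ * S) = M * M := by
    calc (msqrt ρ * S)ᴴ * (msqrt ρ * S) = S * (msqrt ρ * msqrt ρ) * S := by
          rw [conjTranspose_mul, hS.1.eq, (posSemidef_msqrt hρ).1.eq]
          noncomm_ring
      _ = S * P * ρ * (P * S) := by rw [msqrt_mul_msqrt hρ, hSP, hPS]
      _ = S * (S * S) * S := by rw [hS2, hMdef]; noncomm_ring
      _ = M * M := by rw [← hS2]; noncomm_ring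
  rw [traceNorm_eq_re_trace_msqrt, hkey, msqrt_unique hM rfl,
    trace_mul_mul_self_of_idempotent hP2]

lemma fidelity_normalized_conj_projection (hPh : P.IsHermitian) (hP2 : P * P = P) (hρ : ρ.PosSemidef) :
    fidelity ρ ((P * ρ * P).trace⁻¹ • (P * ρ * P)) = (P * ρ).trace.re := by
  have hM : (P * ρ * P).PosSemidef := hρ.mul_mul_same_of_isHermitian hPh
  have htrace : (P * ρ * P).trace = ((P * ρ).trace.re : ℂ) := by
    rw [← trace_mul_mul_self_of_idempotent hP2]
    exact Complex.eq_re_of_ofReal_le (r := 0) (by exact_mod_cast hM.trace_nonneg)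
  have hc : 0 ≤ (P * ρ).trace.re := Complex.zero_le_real.mp (htrace ▸ hM.trace_nonneg)
  -- `c⁻¹ * c ^ 2 = c` holds also for `c = 0`, where the post-measurement state is the junk value `0`.
  rw [htrace, ← Complex.ofReal_inv, fidelity_real_smul_right (inv_nonneg.mpr hc) ρ hM, fidelity,
    traceNorm_msqrt_mul_msqrt_conj_projection hPh hP2 hρ, sq, ← mul_assoc, inv_mul_mul_self]

end

theorem gentle_measurement_general {n : Type*} [Fintype n] [DecidableEq n]
    (P ρ : Matrix n n ℂ) (ε : ℝ)
    (hPh : P.IsHermitian) (hP2 : P * P = P)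
    (hρ : ρ.PosSemidef)
    (htr : 1 - ε ≤ ((P * ρ).trace).re) :
    purifiedDist ρ (((P * ρ * P).trace)⁻¹ • (P * ρ * P)) ≤ Real.sqrt ε := by
  rw [purifiedDist, fidelity_normalized_conj_projection hPh hP2 hρ]
  exact Real.sqrt_le_sqrt (by linarith)

/-- Gentle measurement lemma in purified-distance form. -/
theorem gentle_measurement {n : Type*} [Fintype n] [DecidableEq n]
    (P ρ : Matrix n n ℂ) (ε : ℝ)
    (hPh : P.IsHermitian) (hP2 : P * P = P)
    (hρ : ρ.PosSemidef) (hρ1 : ρ.trace = 1)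
    (hε0 : 0 ≤ ε) (hε1 : ε ≤ 1)
    (hpos : (P * ρ * P).trace ≠ 0)
    (htr : 1 - ε ≤ ((P * ρ).trace).re) :
    purifiedDist ρ (((P * ρ * P).trace)⁻¹ • (P * ρ * P)) ≤ Real.sqrt ε :=
  gentle_measurement_general P ρ ε hPh hP2 hρ htr
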